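/- Social cost difference identity: for the planner actions y* and y† = y* + ε(u_{d'} − u_{d†}) with d' > d†, the social cost satisfies SC(y*) − SC(y†) = τ·(e(y*) − e(y†))·Σ_d d·(y*_d·L_P + (m_d − y*_d)·L_U) + ε·τ·(d' − d†)·e(y†)·ΔL. In particular, if e(y†) < e(y*), ΔL > 0, τ > 0, L_P > 0, then SC(y†) < SC(y*). -/

import Mathlib

open Finset

/-- `𝒟 = {1, …, D_max}`. -/
def Dset (Dmax : ℕ) : Finset ℕ := Finset.Icc 1 Dmax

/-- Weighted degree distribution `w_d = d·m_d / ∑ d'·m_{d'}`. -/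
noncomputable def wgt (Dmax : ℕ) (m : ℕ → ℝ) (d : ℕ) : ℝ :=
  (d : ℝ) * m d / ∑ d' ∈ Dset Dmax, (d' : ℝ) * m d'

/-- `γ(y) = β_IA · ∑_d w_d (p_U − (y_d/m_d)·Δp)` where `Δp = p_U − p_P`. -/
noncomputable def gam (Dmax : ℕ) (m : ℕ → ℝ) (pP pU βIA : ℝ) (y : ℕ → ℝ) : ℝ :=
  βIA * ∑ d ∈ Dset Dmax, wgt Dmax m d * (pU - (y d / m d) * (pU - pP))

/-- `λ(y) = β_IA · ∑_d w_d (d−1) (p_U − (y_d/m_d)·Δp)`. -/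
noncomputable def lamb (Dmax : ℕ) (m : ℕ → ℝ) (pP pU βIA : ℝ) (y : ℕ → ℝ) : ℝ :=
  βIA * ∑ d ∈ Dset Dmax, wgt Dmax m d * ((d : ℝ) - 1) * (pU - (y d / m d) * (pU - pP))

/-- Risk exposure `e(y) = γ(y) · ∑_{k=1}^{K} λ(y)^{k−1}`. -/
noncomputable def expo (Dmax : ℕ) (m : ℕ → ℝ) (pP pU βIA : ℝ) (K : ℕ)
    (y : ℕ → ℝ) : ℝ :=
  gam Dmax m pP pU βIA y * ∑ k ∈ Finset.range K, lamb Dmax m pP pU βIA y ^ k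

/-- Social cost
`SC(y) = ∑_d [ y_d·C_{d,P}(X(y)) + (m_d − y_d)·C_{d,N}(X(y)) ]` with
`C_{d,P} = τ(1 + d·e(y))L_P + c_P` and `C_{d,N} = τ(1 + d·e(y))L_U`. -/
noncomputable def SC (Dmax : ℕ) (m : ℕ → ℝ) (pP pU βIA τ LP LU cP : ℝ) (K : ℕ)
    (y : ℕ → ℝ) : ℝ :=
  ∑ d ∈ Dset Dmax,
    (y d * (τ * (1 + (d : ℝ) * expo Dmax m pP pU βIA K y) * LP + cP)
      + (m d - y d) * (τ * (1 + (d : ℝ) * expo Dmax m pP pU βIA K y) * LU))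

/-- Admissible social planner action: `y_d ∈ [0, m_d]` for each `d ∈ 𝒟`. -/
def isPlan (Dmax : ℕ) (m : ℕ → ℝ) (y : ℕ → ℝ) : Prop :=
  ∀ d ∈ Dset Dmax, 0 ≤ y d ∧ y d ≤ m d

/-!
Freeze the exposure: the social cost at a fixed exposure `e` is affine both in `e` and in the
plan `y`. Changing the exposure from `e(y†)` to `e(y*)` at the plan `y*` costs
`τ (e(y*) - e(y†)) ∑_d d (y*_d L_P + (m_d - y*_d) L_U)`, while moving `ε` agents from class `d†`
to class `d'` at the fixed exposure `e(y†)` saves `ε τ (d' - d†) e(y†) ΔL`, since the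
coefficient of `y_d` is `τ (1 + d e) (L_P - L_U) + c_P`. For the strict inequality, `y†` is
again admissible, so `γ(y†), λ(y†) ≥ 0` give `e(y†) ≥ 0`, and the weighted loss sum is
positive because class `d'` has `m_{d'} - y*_{d'} > ε > 0` unprotected agents.
-/

noncomputable def transfer (ε : ℝ) (i j : ℕ) : ℕ → ℝ :=
  ε • (Pi.single i 1 - Pi.single j 1)

theorem transfer_apply (ε : ℝ) (i j d : ℕ) :
    transfer ε i j d = ε * ((if d = i then 1 else 0) - (if d = j then 1 else 0)) := by
  simp [transfer, Pi.single_apply]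

noncomputable def frozenCost (s : Finset ℕ) (m : ℕ → ℝ) (τ LP LU cP e : ℝ) (y : ℕ → ℝ) : ℝ :=
  ∑ d ∈ s, (y d * (τ * (1 + (d : ℝ) * e) * LP + cP) + (m d - y d) * (τ * (1 + (d : ℝ) * e) * LU))

theorem SC_eq_frozenCost (Dmax : ℕ) (m : ℕ → ℝ) (pP pU βIA τ LP LU cP : ℝ) (K : ℕ)
    (y : ℕ → ℝ) :
    SC Dmax m pP pU βIA τ LP LU cP K y
      = frozenCost (Dset Dmax) m τ LP LU cP (expo Dmax m pP pU βIA K y) y :=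
  rfl

section FrozenCost

variable {s : Finset ℕ} {m : ℕ → ℝ} {τ LP LU cP : ℝ}

theorem frozenCost_sub_frozenCost (e₁ e₂ : ℝ) (y : ℕ → ℝ) :
    frozenCost s m τ LP LU cP e₁ y - frozenCost s m τ LP LU cP e₂ y
      = τ * (e₁ - e₂) * ∑ d ∈ s, (d : ℝ) * (y d * LP + (m d - y d) * LU) := by
  rw [frozenCost, frozenCost, ← sum_sub_distrib, mul_sum]
  exact sum_congr rfl fun d _ => by ring

theorem frozenCost_eq_sum_add_sum (e : ℝ) (y : ℕ → ℝ) :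
    frozenCost s m τ LP LU cP e y
      = ∑ d ∈ s, m d * (τ * (1 + (d : ℝ) * e) * LU)
        + ∑ d ∈ s, (τ * (1 + (d : ℝ) * e) * (LP - LU) + cP) * y d := by
  rw [frozenCost, ← sum_add_distrib]
  exact sum_congr rfl fun d _ => by ring

theorem sum_mul_add_transfer {w y : ℕ → ℝ} {ε : ℝ} {i j : ℕ} (hi : i ∈ s) (hj : j ∈ s) :
    ∑ d ∈ s, w d * (y + transfer ε i j) d
      = ∑ d ∈ s, w d * y d + ε * (w i - w j) := by
  simp only [Pi.add_apply, transfer_apply,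
    mul_add, mul_sub, mul_ite, mul_one, mul_zero, sum_add_distrib, sum_sub_distrib,
    sum_ite_eq', hi, hj, if_true]
  ring

theorem frozenCost_sub_frozenCost_transfer {e ε : ℝ} {y : ℕ → ℝ} {i j : ℕ}
    (hi : i ∈ s) (hj : j ∈ s) :
    frozenCost s m τ LP LU cP e y
        - frozenCost s m τ LP LU cP e (y + transfer ε i j)
      = ε * τ * ((i : ℝ) - j) * e * (LU - LP) := by
  rw [frozenCost_eq_sum_add_sum, frozenCost_eq_sum_add_sum, sum_mul_add_transfer hi hj]
  ring

end FrozenCost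

section Admissible

variable {Dmax : ℕ} {m y : ℕ → ℝ}

theorem isPlan.add_transfer (hy : isPlan Dmax m y) {ε : ℝ} {i j : ℕ} (hε : 0 ≤ ε)
    (hi : ε ≤ m i - y i) (hj : ε ≤ y j) :
    isPlan Dmax m (y + transfer ε i j) := by
  intro d hd
  obtain ⟨hy0, hym⟩ := hy d hd
  simp only [Pi.add_apply, transfer_apply]
  split_ifs <;> subst_vars <;> constructor <;> linarith

theorem wgt_nonneg (hy : isPlan Dmax m y) {d : ℕ} (hd : d ∈ Dset Dmax) : 0 ≤ wgt Dmax m d := by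
  have hm : ∀ d ∈ Dset Dmax, 0 ≤ m d := fun d hd => (hy d hd).1.trans (hy d hd).2
  exact div_nonneg (mul_nonneg d.cast_nonneg (hm d hd))
    (sum_nonneg fun d hd => mul_nonneg d.cast_nonneg (hm d hd))

variable {pP pU : ℝ}

theorem isPlan.sub_div_mul_sub_nonneg (hy : isPlan Dmax m y) (hpP : 0 ≤ pP) (hp : pP ≤ pU)
    {d : ℕ} (hd : d ∈ Dset Dmax) : 0 ≤ pU - y d / m d * (pU - pP) := by
  obtain ⟨hy0, hym⟩ := hy d hd
  have hr0 : 0 ≤ y d / m d := div_nonneg hy0 (hy0.trans hym)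
  have hr1 : y d / m d ≤ 1 := div_le_one_of_le₀ hym (hy0.trans hym)
  -- a convex combination `(1 - r) pU + r pP` of nonnegative numbers
  nlinarith

variable {βIA : ℝ}

theorem gam_nonneg (hy : isPlan Dmax m y) (hpP : 0 ≤ pP) (hp : pP ≤ pU) (hβ : 0 ≤ βIA) :
    0 ≤ gam Dmax m pP pU βIA y :=
  mul_nonneg hβ <| sum_nonneg fun _ hd =>
    mul_nonneg (wgt_nonneg hy hd) (hy.sub_div_mul_sub_nonneg hpP hp hd)

theorem lamb_nonneg (hy : isPlan Dmax m y) (hpP : 0 ≤ pP) (hp : pP ≤ pU) (hβ : 0 ≤ βIA) :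
    0 ≤ lamb Dmax m pP pU βIA y := by
  refine mul_nonneg hβ <| sum_nonneg fun d hd => ?_
  have hd1 : (1 : ℝ) ≤ d := by exact_mod_cast (mem_Icc.mp hd).1
  exact mul_nonneg (mul_nonneg (wgt_nonneg hy hd) (by linarith))
    (hy.sub_div_mul_sub_nonneg hpP hp hd)

theorem expo_nonneg (hy : isPlan Dmax m y) (hpP : 0 ≤ pP) (hp : pP ≤ pU) (hβ : 0 ≤ βIA)
    (K : ℕ) : 0 ≤ expo Dmax m pP pU βIA K y :=
  mul_nonneg (gam_nonneg hy hpP hp hβ) <| sum_nonneg fun k _ =>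
    pow_nonneg (lamb_nonneg hy hpP hp hβ) k

theorem isPlan.sum_mul_loss_pos (hy : isPlan Dmax m y) {LP LU : ℝ} (hLP : 0 ≤ LP)
    (hLU : 0 < LU) {i : ℕ} (hi : i ∈ Dset Dmax) (hyi : y i < m i) :
    0 < ∑ d ∈ Dset Dmax, (d : ℝ) * (y d * LP + (m d - y d) * LU) := by
  refine sum_pos' (fun d hd => ?_) ⟨i, hi, ?_⟩
  · obtain ⟨hy0, hym⟩ := hy d hd
    exact mul_nonneg d.cast_nonneg
      (add_nonneg (mul_nonneg hy0 hLP) (mul_nonneg (sub_nonneg.mpr hym) hLU.le))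
  · have hi1 : (0 : ℝ) < i := by exact_mod_cast (mem_Icc.mp hi).1
    exact mul_pos hi1
      (add_pos_of_nonneg_of_pos (mul_nonneg (hy i hi).1 hLP) (mul_pos (sub_pos.mpr hyi) hLU))

end Admissible

theorem planner_social_cost_difference_general (Dmax : ℕ)
    (m : ℕ → ℝ)
    (pP pU βIA τ LP LU cP : ℝ) (K : ℕ)
    (hpP : 0 ≤ pP) (hp : pP < pU)
    (hβ0 : 0 < βIA)
    (hτ0 : 0 < τ) (hLP : 0 < LP) (hL : LP < LU)
    (ystar : ℕ → ℝ) (hplan : isPlan Dmax m ystar)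
    (ddag d' : ℕ) (hddag : ddag ∈ Dset Dmax) (hd' : d' ∈ Dset Dmax)
    (hlt : ddag < d')
    (ε : ℝ) (hε0 : 0 < ε) (hε : ε < min (ystar ddag) (m d' - ystar d'))
    (ydag : ℕ → ℝ)
    (hydag : ydag = fun d => ystar d
      + ε * ((if d = d' then 1 else 0) - (if d = ddag then 1 else 0))) :
    SC Dmax m pP pU βIA τ LP LU cP K ystar - SC Dmax m pP pU βIA τ LP LU cP K ydag
      = τ * (expo Dmax m pP pU βIA K ystar - expo Dmax m pP pU βIA K ydag) *
          (∑ d ∈ Dset Dmax, (d : ℝ) * (ystar d * LP + (m d - ystar d) * LU))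
        + ε * τ * ((d' : ℝ) - (ddag : ℝ)) * expo Dmax m pP pU βIA K ydag * (LU - LP) ∧
    (expo Dmax m pP pU βIA K ydag < expo Dmax m pP pU βIA K ystar →
      SC Dmax m pP pU βIA τ LP LU cP K ydag < SC Dmax m pP pU βIA τ LP LU cP K ystar) := by
  have hydag' : ydag = ystar + transfer ε d' ddag := by
    subst hydag; funext d; rw [Pi.add_apply, transfer_apply]
  set e := expo Dmax m pP pU βIA K
  have hidentity : SC Dmax m pP pU βIA τ LP LU cP K ystar - SC Dmax m pP pU βIA τ LP LU cP K ydag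
      = τ * (e ystar - e ydag) *
          (∑ d ∈ Dset Dmax, (d : ℝ) * (ystar d * LP + (m d - ystar d) * LU))
        + ε * τ * ((d' : ℝ) - (ddag : ℝ)) * e ydag * (LU - LP) := by
    rw [SC_eq_frozenCost, SC_eq_frozenCost,
      ← sub_add_sub_cancel _ (frozenCost (Dset Dmax) m τ LP LU cP (e ydag) ystar),
      frozenCost_sub_frozenCost, hydag', frozenCost_sub_frozenCost_transfer hd' hddag]
  refine ⟨hidentity, fun he => ?_⟩
  have hεdag : ε < ystar ddag := hε.trans_le (min_le_left _ _)
  have hεd' : ε < m d' - ystar d' := hε.trans_le (min_le_right _ _)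
  have hydag_plan : isPlan Dmax m ydag := hydag' ▸ hplan.add_transfer hε0.le hεd'.le hεdag.le
  have hloss : 0 < ∑ d ∈ Dset Dmax, (d : ℝ) * (ystar d * LP + (m d - ystar d) * LU) :=
    hplan.sum_mul_loss_pos hLP.le (hLP.trans hL) hd' (by linarith)
  have hshift : (0 : ℝ) ≤ d' - ddag := sub_nonneg.mpr (by exact_mod_cast hlt.le)
  have hedag : 0 ≤ e ydag := expo_nonneg hydag_plan hpP hp.le hβ0.le K
  have hexposure_gain := mul_pos (mul_pos hτ0 (sub_pos.mpr he)) hloss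
  have htransfer_gain :=
    mul_nonneg (mul_nonneg (mul_nonneg (mul_nonneg hε0.le hτ0.le) hshift) hedag)
      (sub_nonneg.mpr hL.le)
  linarith

/-- social cost difference identity for the perturbation
`y† = y* + ε(u_{d'} − u_{d†})` with `d' > d†`:
`SC(y*) − SC(y†) = τ·(e(y*) − e(y†))·∑_d d·(y*_d·L_P + (m_d − y*_d)·L_U)
  + ε·τ·(d' − d†)·e(y†)·ΔL`,
and consequently `SC(y†) < SC(y*)` whenever `e(y†) < e(y*)`. -/
theorem planner_social_cost_difference (Dmax : ℕ) (hD : 1 ≤ Dmax)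
    (m : ℕ → ℝ) (hm : ∀ d ∈ Dset Dmax, 0 < m d)
    (pP pU βIA τ LP LU cP : ℝ) (K : ℕ)
    (hpP : 0 ≤ pP) (hp : pP < pU) (hpU : pU ≤ 1)
    (hβ0 : 0 < βIA) (hβ1 : βIA ≤ 1) (hK : 1 ≤ K)
    (hτ0 : 0 < τ) (hτ1 : τ ≤ 1) (hLP : 0 < LP) (hL : LP < LU) (hcP : 0 < cP)
    (ystar : ℕ → ℝ) (hplan : isPlan Dmax m ystar)
    (ddag d' : ℕ) (hddag : ddag ∈ Dset Dmax) (hd' : d' ∈ Dset Dmax)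
    (hlt : ddag < d')
    (ε : ℝ) (hε0 : 0 < ε) (hε : ε < min (ystar ddag) (m d' - ystar d'))
    (ydag : ℕ → ℝ)
    (hydag : ydag = fun d => ystar d
      + ε * ((if d = d' then 1 else 0) - (if d = ddag then 1 else 0))) :
    SC Dmax m pP pU βIA τ LP LU cP K ystar - SC Dmax m pP pU βIA τ LP LU cP K ydag
      = τ * (expo Dmax m pP pU βIA K ystar - expo Dmax m pP pU βIA K ydag) *
          (∑ d ∈ Dset Dmax, (d : ℝ) * (ystar d * LP + (m d - ystar d) * LU))
        + ε * τ * ((d' : ℝ) - (ddag : ℝ)) * expo Dmax m pP pU βIA K ydag * (LU - LP) ∧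
    (expo Dmax m pP pU βIA K ydag < expo Dmax m pP pU βIA K ystar →
      SC Dmax m pP pU βIA τ LP LU cP K ydag < SC Dmax m pP pU βIA τ LP LU cP K ystar) :=
  planner_social_cost_difference_general Dmax m pP pU βIA τ LP LU cP K hpP hp hβ0 hτ0 hLP hL ystar
    hplan ddag d' hddag hd' hlt ε hε0 hε ydag hydag
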